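/- (Virtualised Cutolo) If δ is virtually proto-Berkeley, then for every transitive set M with δ ⊆ M and every A ⊆ M there exists a generic elementary embedding π : (M,∈,A) → (M,∈,A) with crit π < δ. If δ is virtually Berkeley, then moreover crit π can be chosen arbitrarily large below δ. -/

import Mathlib

open FirstOrder FirstOrder.Language

namespace VLC

universe u v

/- ## The language of set theory (with two auxiliary unary predicates) -/

/-- Function symbols: none. -/
inductive Funcs : ℕ → Type
/-- Relation symbols: two unary predicate symbols and one binary (membership) symbol. -/
inductive Rels : ℕ → Type
  | u1 : Rels 1
  | u2 : Rels 1
  | mem : Rels 2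

/-- The first-order language with one binary relation symbol (membership) and two
unary predicate symbols (used for expanded structures `(M, ∈, A, B)`; when a unary
predicate is not needed it is interpreted as the always-false predicate, which does
not change the notion of elementarity). -/
def L3 : Language := ⟨Funcs, Rels⟩

/-- The `L3`-structure on the subclass `{x // dom x}` of a "universe" `V`, with
membership interpreted by `r` and the two unary predicates by `A1`, `A2`. -/
def mstr {V : Type u} (dom : V → Prop) (r : V → V → Prop) (A1 A2 : V → Prop) :
    L3.Structure {x : V // dom x} where
  funMap := fun f _ => nomatch f
  RelMap := fun rel v =>
    match rel with
    | .u1 => A1 (v 0).1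
    | .u2 => A2 (v 0).1
    | .mem => r (v 0).1 (v 1).1

/-- The `L3`-structure on all of `V` with membership `r` (unary predicates empty). -/
def memStr {V : Type u} (r : V → V → Prop) : L3.Structure V where
  funMap := fun f _ => nomatch f
  RelMap := fun rel v =>
    match rel with
    | .u1 => False
    | .u2 => False
    | .mem => r (v 0) (v 1)

/-- An elementary embedding between the structures `({x // domV x}, rV, A1, A2)` and
`({y // domW y}, rW, B1, B2)`: a map preserving the satisfaction of all first-order
formulas of the language of set theory (with two predicates). -/
def ElemEmb {V : Type u} {W : Type v} (domV : V → Prop) (rV : V → V → Prop) (A1 A2 : V → Prop)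
    (domW : W → Prop) (rW : W → W → Prop) (B1 B2 : W → Prop) : Type (max u v) :=
  @ElementaryEmbedding L3 {x : V // domV x} {y : W // domW y}
    (mstr domV rV A1 A2) (mstr domW rW B1 B2)

/-- Application of an elementary embedding. -/
def eApp {V : Type u} {W : Type v} {domV : V → Prop} {rV : V → V → Prop} {A1 A2 : V → Prop}
    {domW : W → Prop} {rW : W → W → Prop} {B1 B2 : W → Prop}
    (e : ElemEmb domV rV A1 A2 domW rW B1 B2) (x : {x : V // domV x}) : {y : W // domW y} :=
  @ElementaryEmbedding.toFun L3 {x : V // domV x} {y : W // domW y}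
    (mstr domV rV A1 A2) (mstr domW rW B1 B2) e x

/-- Realization of a formula with parameters in the full structure `(V, r)`. -/
def RealizeIn {V : Type u} (r : V → V → Prop) {n l : ℕ} (φ : L3.BoundedFormula (Fin n) l)
    (prm : Fin n → V) (xs : Fin l → V) : Prop :=
  @BoundedFormula.Realize L3 V (memStr r) (Fin n) l φ prm xs

/-- Realization of a sentence-with-parameters in the substructure of `(V, r)` on `{x // dom x}`. -/
def RealizeSub {V : Type u} (dom : V → Prop) (r : V → V → Prop) {n l : ℕ}
    (φ : L3.BoundedFormula (Fin n) l) (prm : Fin n → {x : V // dom x})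
    (xs : Fin l → {x : V // dom x}) : Prop :=
  @BoundedFormula.Realize L3 {x : V // dom x} (mstr dom r (fun _ => False) (fun _ => False))
    (Fin n) l φ prm xs

/- ## Basic set-theoretic notions over an abstract membership relation -/

section Basic

variable {V : Type u} (r : V → V → Prop)

/-- `a ⊆ b`. -/
def SubW (a b : V) : Prop := ∀ x, r x a → r x b

/-- `a` is a transitive set. -/
def TransW (a : V) : Prop := ∀ x y, r x a → r y x → r y a

/-- `a` is an ordinal (a transitive set of transitive sets; this is equivalent to the usual
definition in the presence of foundation). -/
def OrdW (a : V) : Prop := TransW r a ∧ ∀ x, r x a → TransW r x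

/-- `a ≤ b` for ordinals: `a ∈ b ∨ a = b`. -/
def ordLe (a b : V) : Prop := r a b ∨ a = b

/-- `p = {a, b}`. -/
def IsUPair (p a b : V) : Prop := ∀ x, r x p ↔ (x = a ∨ x = b)

/-- `p` is the (Kuratowski) ordered pair `⟨a, b⟩`. -/
def IsOPair (p a b : V) : Prop :=
  ∃ sa sab, IsUPair r sa a a ∧ IsUPair r sab a b ∧ IsUPair r p sa sab

/-- The pair `⟨x, y⟩` belongs to `f` (i.e. `f(x) = y` when `f` is a function). -/
def FApp (f x y : V) : Prop := ∃ z, r z f ∧ IsOPair r z x y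

/-- `f` is a function with domain `a`. -/
def IsFunOn (f a : V) : Prop :=
  (∀ z, r z f → ∃ x y, r x a ∧ IsOPair r z x y) ∧
  (∀ x, r x a → ∃ y, FApp r f x y) ∧
  (∀ x y y', FApp r f x y → FApp r f x y' → y = y')

/-- `f : a → b` is a function. -/
def IsFuncW (f a b : V) : Prop := IsFunOn r f a ∧ ∀ x y, FApp r f x y → r y b

/-- `f : a → b` is an injective function. -/
def IsInjW (f a b : V) : Prop :=
  IsFuncW r f a b ∧ ∀ x x' y, FApp r f x y → FApp r f x' y → x = x'

/-- `f : a → b` is a surjective function. -/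
def IsSurjW (f a b : V) : Prop :=
  IsFuncW r f a b ∧ ∀ y, r y b → ∃ x, r x a ∧ FApp r f x y

/-- `a` and `b` are equinumerous. -/
def EquinumW (a b : V) : Prop := ∃ f, IsInjW r f a b ∧ IsSurjW r f a b

/-- `t` is the transitive closure of `x` (the least transitive superset). -/
def TCW (t x : V) : Prop :=
  SubW r x t ∧ TransW r t ∧ ∀ s, SubW r x s → TransW r s → SubW r t s

/-- `|a| < θ` for a cardinal `θ`: `a` injects into some element of `θ`. -/
def CardLtW (a θ : V) : Prop := ∃ β f, r β θ ∧ IsInjW r f a β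

/-- `x ∈ H_θ`: the transitive closure of `x` has cardinality `< θ`. -/
def InHW (θ x : V) : Prop := ∃ t, TCW r t x ∧ CardLtW r t θ

/-- `h = H_θ`, the collection of sets whose transitive closure has size `< θ`. -/
def IsHW (θ h : V) : Prop := ∀ x, r x h ↔ InHW r θ x

/-- `κ` is a cardinal: an ordinal not equinumerous with any of its elements. -/
def IsCardW (κ : V) : Prop := OrdW r κ ∧ ∀ β, r β κ → ¬ EquinumW r β κ

/-- `e = ∅`. -/
def IsEmptyW (e : V) : Prop := ∀ x, ¬ r x e

/-- `s = x ∪ {x}` is the ordinal successor of `x`. -/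
def IsSuccOf (s x : V) : Prop := ∀ z, r z s ↔ (r z x ∨ z = x)

/-- `o` is a limit ordinal. -/
def LimitOrdW (o : V) : Prop := OrdW r o ∧ (∃ x, r x o) ∧ ∀ x, r x o → ∃ y, r y o ∧ r x y

/-- `o = ω`, the least limit ordinal. -/
def IsOmegaW (o : V) : Prop := LimitOrdW r o ∧ ∀ x, r x o → ¬ LimitOrdW r x

/-- `θ` is a regular cardinal: no function from an element of `θ` into `θ` has unbounded range. -/
def RegularW (θ : V) : Prop := IsCardW r θ ∧
  ∀ β f, r β θ → IsFunOn r f β → (∀ x y, FApp r f x y → r y θ) →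
    ∃ γ, r γ θ ∧ ∀ x y, FApp r f x y → r y γ

/-- `θ` is a regular uncountable cardinal. -/
def RegUncW (θ : V) : Prop := RegularW r θ ∧ ∃ o, IsOmegaW r o ∧ r o θ

/-- `θ` is an infinite regular cardinal. -/
def RegularInfW (θ : V) : Prop := RegularW r θ ∧ ∃ o, IsOmegaW r o ∧ ordLe r o θ

/-- `p = 𝒫(x)`. -/
def IsPowW (p x : V) : Prop := ∀ z, r z p ↔ SubW r z x

/-- `θ` is inaccessible: an uncountable regular strong limit cardinal. -/
def InaccW (θ : V) : Prop :=
  RegUncW r θ ∧ ∀ β p, r β θ → IsPowW r p β → CardLtW r p θ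

/-- `s = κ⁺` is the cardinal successor of `κ`. -/
def CardSuccOf (κ s : V) : Prop := IsCardW r s ∧ r κ s ∧ ∀ c, IsCardW r c → r κ c → ordLe r s c

/-- `C` is a club (closed unbounded set) in `δ`. -/
def ClubInW (C δ : V) : Prop :=
  SubW r C δ ∧ (∀ x, r x C → OrdW r x) ∧
  (∀ α, r α δ → ∃ β, r β C ∧ (r α β ∨ α = β)) ∧
  (∀ γ, r γ δ → OrdW r γ → (∃ x, r x γ) →
    (∀ α, r α γ → ∃ β, r β C ∧ r α β ∧ r β γ) → r γ C)

/-- `δ` is a Mahlo cardinal: inaccessible, and every club in `δ` contains a regular cardinal. -/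
def MahloW (δ : V) : Prop :=
  InaccW r δ ∧ ∀ C, ClubInW r C δ → ∃ κ, r κ C ∧ RegularInfW r κ

/-- `g = f ↾ κ` is the restriction of the function `f` to `κ`. -/
def RestrOf (g f κ : V) : Prop :=
  ∀ z, r z g ↔ (r z f ∧ ∃ x y, IsOPair r z x y ∧ r x κ)

/-- `κ` is a closure point of the function `f`: `f '' κ ⊆ κ`. -/
def ClosurePtW (f κ : V) : Prop := ∀ x y, r x κ → FApp r f x y → r y κ

/-- `⟨p, q⟩` belongs to the relation (set of ordered pairs) `rel`. -/
def RelIn (rel p q : V) : Prop := ∃ z, r z rel ∧ IsOPair r z p q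

/-- `a` is countable: `a` injects into `ω`. -/
def CountableW (a : V) : Prop := ∃ o f, IsOmegaW r o ∧ IsInjW r f a o

end Basic

/- ## ZFC universes -/

/-- A universe of ZFC: a (well-founded) type with a membership relation satisfying the ZFC
axioms; the separation and replacement schemas are stated for all first-order formulas
(with parameters) of the language of set theory. Foundation is strengthened to
well-foundedness, i.e. we consider standard models. -/
structure ZFUniv : Type (u + 1) where
  V : Type u
  mem : V → V → Prop
  wf : WellFounded mem
  extensionality : ∀ x y : V, (∀ z, mem z x ↔ mem z y) → x = y
  pairing : ∀ x y : V, ∃ p, IsUPair mem p x y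
  unions : ∀ x : V, ∃ u, ∀ z, mem z u ↔ ∃ y, mem y x ∧ mem z y
  power : ∀ x : V, ∃ p, IsPowW mem p x
  infinity : ∃ o : V, IsOmegaW mem o
  separation : ∀ (n : ℕ) (φ : L3.BoundedFormula (Fin n) 1) (prm : Fin n → V) (a : V),
    ∃ b, ∀ x, mem x b ↔ (mem x a ∧ RealizeIn mem φ prm (fun _ => x))
  replacement : ∀ (n : ℕ) (φ : L3.BoundedFormula (Fin n) 2) (prm : Fin n → V) (a : V),
    (∀ x y y', mem x a → RealizeIn mem φ prm ![x, y] → RealizeIn mem φ prm ![x, y'] → y = y') →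
    ∃ b, ∀ y, mem y b ↔ ∃ x, mem x a ∧ RealizeIn mem φ prm ![x, y]
  choice : ∀ a : V, (∀ x, mem x a → ∃ y, mem y x) →
    ∃ f, IsFunOn mem f a ∧ ∀ x y, mem x a → FApp mem f x y → mem y x

/- ## Set-forcing extensions -/

/-- A set-forcing extension of the universe `u`: a universe `W` together with an
inclusion of `u` as a transitive subclass, a forcing poset `pos` (with preorder `lerel`,
a set of ordered pairs, where `RelIn lerel p q` means `p` is stronger than `q`)
belonging to `u`, a filter `G ⊆ pos` meeting every dense subset of `pos` that belongs
to `u`, such that `G ∈ W` and every element of `W` is the value `val τ` of some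
`pos`-name `τ ∈ u`, where names are evaluated by `G` in the standard recursive fashion.
This pins `W` down as the generic extension `u[G]`. -/
structure Extension (u : ZFUniv.{u}) : Type (u + 1) where
  W : ZFUniv.{u}
  inc : u.V → W.V
  inc_inj : Function.Injective inc
  inc_mem : ∀ x y, W.mem (inc x) (inc y) ↔ u.mem x y
  inc_trans : ∀ (x : u.V) (w : W.V), W.mem w (inc x) → ∃ y, u.mem y x ∧ w = inc y
  pos : u.V
  lerel : u.V
  le_pairs : ∀ z, u.mem z lerel → ∃ p q, u.mem p pos ∧ u.mem q pos ∧ IsOPair u.mem z p q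
  le_refl : ∀ p, u.mem p pos → RelIn u.mem lerel p p
  le_trans : ∀ p q s, RelIn u.mem lerel p q → RelIn u.mem lerel q s → RelIn u.mem lerel p s
  G : u.V → Prop
  G_sub : ∀ p, G p → u.mem p pos
  G_ne : ∃ p, G p
  G_up : ∀ p q, G p → u.mem q pos → RelIn u.mem lerel p q → G q
  G_dir : ∀ p q, G p → G q → ∃ s, G s ∧ RelIn u.mem lerel s p ∧ RelIn u.mem lerel s q
  G_gen : ∀ D, (∀ d, u.mem d D → u.mem d pos) →
    (∀ p, u.mem p pos → ∃ d, u.mem d D ∧ RelIn u.mem lerel d p) → ∃ p, G p ∧ u.mem p D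
  Gset : W.V
  Gset_spec : ∀ w, W.mem w Gset ↔ ∃ p, G p ∧ w = inc p
  val : u.V → W.V
  val_spec : ∀ τ w, W.mem w (val τ) ↔
    ∃ σ p z, u.mem z τ ∧ IsOPair u.mem z σ p ∧ G p ∧ w = val σ
  val_surj : ∀ w, ∃ τ, w = val τ

/- ## Generic elementary embeddings -/

/-- A generic elementary embedding from the structure `(h, ∈, A1, A2)`, where `h` is a set
of the universe `u`, to a structure `(tgt, ∈, bset, b2)` living in some set-forcing
extension of `u`: the embedding is an element (`code`) of the extension `E.W`, and `emb`
is its externalization, an elementary embedding in the model-theoretic sense. -/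
structure GenEmb (u : ZFUniv.{u}) (h : u.V) (A1 A2 : u.V → Prop) : Type (u + 1) where
  E : Extension u
  tgt : E.W.V
  bset : E.W.V
  b2 : E.W.V → Prop := fun _ => False
  emb : ElemEmb (u.mem · h) u.mem A1 A2 (E.W.mem · tgt) E.W.mem (E.W.mem · bset) b2
  code : E.W.V
  code_fun : IsFuncW E.W.mem code (E.inc h) tgt
  code_graph : ∀ x (hx : u.mem x h), FApp E.W.mem code (E.inc x) (eApp emb ⟨x, hx⟩).1

namespace GenEmb

variable {u : ZFUniv.{u}} {h : u.V} {A1 A2 : u.V → Prop} (D : GenEmb u h A1 A2)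

/-- The critical point of the embedding is `κ`: `κ` is an ordinal, all ordinals below `κ`
are fixed, and `κ` is moved. -/
def crit (κ : u.V) : Prop :=
  OrdW u.mem κ ∧ ∃ hκ : u.mem κ h,
    (∀ α (hα : u.mem α h), u.mem α κ → (eApp D.emb ⟨α, hα⟩).1 = D.E.inc α) ∧
    (eApp D.emb ⟨κ, hκ⟩).1 ≠ D.E.inc κ

/-- `π(x) = y` where `y` is (the copy of) a set of the ground universe. -/
def mapsTo (x y : u.V) : Prop := ∃ hx : u.mem x h, (eApp D.emb ⟨x, hx⟩).1 = D.E.inc y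

/-- `π(κ) > θ`. -/
def jGT (κ θ : u.V) : Prop := ∃ hκ : u.mem κ h, D.E.W.mem (D.E.inc θ) (eApp D.emb ⟨κ, hκ⟩).1

/-- `π(κ) ≤ θ`. -/
def jLE (κ θ : u.V) : Prop := ∃ hκ : u.mem κ h, ordLe D.E.W.mem (eApp D.emb ⟨κ, hκ⟩).1 (D.E.inc θ)

/-- `H_θ ⊆ N`, i.e. the domain `h` is contained in the target. -/
def hSub : Prop := ∀ x, u.mem x h → D.E.W.mem (D.E.inc x) D.tgt

/-- The target is a transitive set (of the extension). -/
def tgtTrans : Prop := TransW D.E.W.mem D.tgt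

/-- The target is (the copy of) the ground-universe set `N`; in particular `N ⊆ V`. -/
def tgtIs (N : u.V) : Prop := D.tgt = D.E.inc N

/-- `B ∩ h = A` where `B` is the predicate of the target structure. -/
def bMatch (A : u.V → Prop) : Prop :=
  ∀ x, u.mem x h → (D.E.W.mem (D.E.inc x) D.bset ↔ A x)

/-- The target is closed under `<θ`-sequences from the ground universe: every function
in `u` from an ordinal `γ < θ` into the target belongs to the target. -/
def closedLt (θ : u.V) : Prop := ∀ s γ, u.mem γ θ → OrdW u.mem γ → IsFunOn u.mem s γ →
  (∀ x y, FApp u.mem s x y → D.E.W.mem (D.E.inc y) D.tgt) → D.E.W.mem (D.E.inc s) D.tgt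

/-- The embedding is `κ`-powerset preserving: its domain and target have the same subsets
of `κ` (in the extension). -/
def powerPres (κ : u.V) : Prop :=
  ∀ w, SubW D.E.W.mem w (D.E.inc κ) → (D.E.W.mem w (D.E.inc h) ↔ D.E.W.mem w D.tgt)

/-- `H_θ = H_θ^N` : the domain `h = H_θ` coincides with `H_θ` as computed inside the
(possibly generic) transitive target `N = tgt`, namely the collection of `x ∈ N` having,
in `N`, a transitive closure `t` and an injection of `t` into some `β ∈ θ`. -/
def hEqHtgt (θ : u.V) : Prop :=
  ∀ w, D.E.W.mem w (D.E.inc h) ↔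
    (D.E.W.mem w D.tgt ∧ ∃ t f β, D.E.W.mem t D.tgt ∧ TCW D.E.W.mem t w ∧
      D.E.W.mem β (D.E.inc θ) ∧ D.E.W.mem f D.tgt ∧ IsInjW D.E.W.mem f t β)

end GenEmb

/-- A generic elementary embedding of plain ∈-structures (no predicates). -/
abbrev PlainEmb (u : ZFUniv.{u}) (h : u.V) : Type (u + 1) :=
  GenEmb u h (fun _ => False) (fun _ => False)


section Notions

variable (u : ZFUniv.{u})

/- ### Measurable / strong / supercompact family -/

/-- `κ` is faintly `θ`-measurable: in a forcing extension there are a transitive set `N`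
and an elementary embedding `π : H_θ → N` with critical point `κ`. -/
def FaintMeasAt (θ κ : u.V) : Prop := ∃ h, IsHW u.mem θ h ∧
  ∃ D : PlainEmb u h, D.tgtTrans ∧ D.crit κ

/-- `κ` is virtually `θ`-measurable: moreover `N ⊆ V` (the target is a set of the ground
universe). -/
def VirtMeasAt (θ κ : u.V) : Prop := ∃ h, IsHW u.mem θ h ∧
  ∃ (N : u.V) (D : PlainEmb u h), D.tgtIs N ∧ TransW u.mem N ∧ D.crit κ

/-- `κ` is faintly `θ`-pre-strong: faintly `θ`-measurable with `H_θ ⊆ N`. -/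
def FaintPreStrongAt (θ κ : u.V) : Prop := ∃ h, IsHW u.mem θ h ∧
  ∃ D : PlainEmb u h, D.tgtTrans ∧ D.crit κ ∧ D.hSub

/-- `κ` is faintly `θ`-strong: faintly `θ`-pre-strong with `π(κ) > θ`. -/
def FaintStrongAt (θ κ : u.V) : Prop := ∃ h, IsHW u.mem θ h ∧
  ∃ D : PlainEmb u h, D.tgtTrans ∧ D.crit κ ∧ D.hSub ∧ D.jGT κ θ

/-- `κ` is virtually `θ`-pre-strong: `N ⊆ V`, `H_θ ⊆ N`, `crit π = κ`. -/
def VirtPreStrongAt (θ κ : u.V) : Prop := ∃ h, IsHW u.mem θ h ∧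
  ∃ (N : u.V) (D : PlainEmb u h), D.tgtIs N ∧ TransW u.mem N ∧ D.crit κ ∧ D.hSub

/-- `κ` is virtually `θ`-strong: virtually `θ`-pre-strong with `π(κ) > θ`. -/
def VirtStrongAt (θ κ : u.V) : Prop := ∃ h, IsHW u.mem θ h ∧
  ∃ (N : u.V) (D : PlainEmb u h), D.tgtIs N ∧ TransW u.mem N ∧ D.crit κ ∧ D.hSub ∧ D.jGT κ θ

/-- `κ` is virtually `θ`-supercompact: virtually `θ`-measurable with target closed under
`<θ`-sequences from the ground universe and `π(κ) > θ`. -/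
def VirtSupercompactAt (θ κ : u.V) : Prop := ∃ h, IsHW u.mem θ h ∧
  ∃ (N : u.V) (D : PlainEmb u h), D.tgtIs N ∧ TransW u.mem N ∧ D.crit κ ∧
    D.closedLt θ ∧ D.jGT κ θ

/-- `κ` is virtually `θ`-supercompact ala Magidor: there are `κ̄ < θ̄ < κ` and a generic
elementary embedding `π : H_θ̄ → H_θ` with `crit π = κ̄` and `π(κ̄) = κ`. -/
def VirtMagidorAt (θ κ : u.V) : Prop := ∃ κ' θ', u.mem κ' θ' ∧ u.mem θ' κ ∧
  ∃ h' h, IsHW u.mem θ' h' ∧ IsHW u.mem θ h ∧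
    ∃ D : PlainEmb u h', D.tgtIs h ∧ D.crit κ' ∧ D.mapsTo κ' κ

/-- `κ` is virtually strong: virtually `θ`-strong for all regular (uncountable) `θ > κ`. -/
def VirtStrong (κ : u.V) : Prop := ∀ θ, RegUncW u.mem θ → u.mem κ θ → VirtStrongAt u θ κ

/-- `κ` is virtually supercompact. -/
def VirtSupercompact (κ : u.V) : Prop :=
  ∀ θ, RegUncW u.mem θ → u.mem κ θ → VirtSupercompactAt u θ κ

/-- `κ` is virtually supercompact ala Magidor. -/
def VirtMagidor (κ : u.V) : Prop := ∀ θ, RegUncW u.mem θ → u.mem κ θ → VirtMagidorAt u θ κ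

/-- `κ` is virtually pre-strong. -/
def VirtPreStrong (κ : u.V) : Prop := ∀ θ, RegUncW u.mem θ → u.mem κ θ → VirtPreStrongAt u θ κ

/- ### Power(set-preserving) variants -/

/-- `κ` is faintly power-`θ`-measurable: the generic embedding is moreover
`κ`-powerset preserving. -/
def FaintPowerMeasAt (θ κ : u.V) : Prop := ∃ h, IsHW u.mem θ h ∧
  ∃ D : PlainEmb u h, D.tgtTrans ∧ D.crit κ ∧ D.powerPres κ

/-- `κ` is faintly power-`θ`-pre-strong. -/
def FaintPowerPreStrongAt (θ κ : u.V) : Prop := ∃ h, IsHW u.mem θ h ∧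
  ∃ D : PlainEmb u h, D.tgtTrans ∧ D.crit κ ∧ D.hSub ∧ D.powerPres κ

/-- `κ` is faintly power-`θ`-strong. -/
def FaintPowerStrongAt (θ κ : u.V) : Prop := ∃ h, IsHW u.mem θ h ∧
  ∃ D : PlainEmb u h, D.tgtTrans ∧ D.crit κ ∧ D.hSub ∧ D.jGT κ θ ∧ D.powerPres κ

/- ### Superstrong / rank-into-rank family -/

/-- `κ` is virtually `(θ,1)`-superstrong: as virtually `θ`-pre-strong, with `π(κ) ≤ θ`. -/
def VirtSuperstrong1At (θ κ : u.V) : Prop := ∃ h, IsHW u.mem θ h ∧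
  ∃ (N : u.V) (D : PlainEmb u h), D.tgtIs N ∧ TransW u.mem N ∧ D.crit κ ∧ D.hSub ∧ D.jLE κ θ

/-- `κ` is faintly `(θ,1)`-superstrong. -/
def FaintSuperstrong1At (θ κ : u.V) : Prop := ∃ h, IsHW u.mem θ h ∧
  ∃ D : PlainEmb u h, D.tgtTrans ∧ D.crit κ ∧ D.hSub ∧ D.jLE κ θ

/-- `κ` is faintly superstrong: faintly `(θ,1)`-superstrong for some regular uncountable
`θ > κ`. -/
def FaintSuperstrong (κ : u.V) : Prop :=
  ∃ θ, RegUncW u.mem θ ∧ u.mem κ θ ∧ FaintSuperstrong1At u θ κ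

/-- `κ` is virtually `(θ,ω)`-superstrong: as virtually `θ`-pre-strong, together with the
full critical sequence `κ = π⁰(κ), π¹(κ), π²(κ), …` satisfying `πⁿ(κ) < θ` for all `n`
(equivalently `π^ω(κ) = sup_n πⁿ(κ) ≤ θ`). -/
def VirtOmegaSuperstrongAt (θ κ : u.V) : Prop := ∃ h, IsHW u.mem θ h ∧
  ∃ (N : u.V) (D : PlainEmb u h), D.tgtIs N ∧ TransW u.mem N ∧ D.crit κ ∧ D.hSub ∧
    ∃ c : ℕ → u.V, c 0 = κ ∧ ∀ n, u.mem (c n) θ ∧ D.mapsTo (c n) (c (n + 1))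

/-- `κ` is virtually rank-into-rank: there is a cardinal `θ > κ` and a generic elementary
embedding `π : H_θ → H_θ` with `crit π = κ`. -/
def VirtRankToRank (κ : u.V) : Prop := ∃ θ h, IsCardW u.mem θ ∧ u.mem κ θ ∧ IsHW u.mem θ h ∧
  ∃ D : PlainEmb u h, D.tgtIs h ∧ D.crit κ

/- ### (θ, A)-strong family (for a set `A`) and Woodin cardinals -/

/-- `κ` is virtually `(θ, A)`-strong (`A` a set of the ground universe): there is a generic
elementary embedding `π : (H_θ, ∈, A ∩ H_θ) → (N, ∈, B)` with `N` transitive, `N ⊆ V`,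
`crit π = κ`, `π(κ) > θ`, `H_θ ⊆ N` and `B ∩ H_θ = A ∩ H_θ`. -/
def VirtAStrongAt (θ κ A : u.V) : Prop := ∃ h, IsHW u.mem θ h ∧
  ∃ (N : u.V) (D : GenEmb u h (u.mem · A) (fun _ => False)), D.tgtIs N ∧ TransW u.mem N ∧
    D.crit κ ∧ D.jGT κ θ ∧ D.hSub ∧ D.bMatch (u.mem · A)

/-- `κ` is faintly `(θ, A)`-strong: as above but `N` is merely a transitive set of the
extension. -/
def FaintAStrongAt (θ κ A : u.V) : Prop := ∃ h, IsHW u.mem θ h ∧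
  ∃ D : GenEmb u h (u.mem · A) (fun _ => False), D.tgtTrans ∧
    D.crit κ ∧ D.jGT κ θ ∧ D.hSub ∧ D.bMatch (u.mem · A)

/-- `κ` is virtually `(θ, A)`-supercompact: moreover the target is closed under
`<θ`-sequences from the ground universe. -/
def VirtASupercompactAt (θ κ A : u.V) : Prop := ∃ h, IsHW u.mem θ h ∧
  ∃ (N : u.V) (D : GenEmb u h (u.mem · A) (fun _ => False)), D.tgtIs N ∧ TransW u.mem N ∧
    D.crit κ ∧ D.jGT κ θ ∧ D.hSub ∧ D.bMatch (u.mem · A) ∧ D.closedLt θ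

/-- `κ` is virtually `(θ, A)`-extendible: moreover the target is `H_μ` for some cardinal
`μ` of the ground universe. -/
def VirtAExtendibleAt (θ κ A : u.V) : Prop := ∃ h, IsHW u.mem θ h ∧
  ∃ (N : u.V) (D : GenEmb u h (u.mem · A) (fun _ => False)), D.tgtIs N ∧ TransW u.mem N ∧
    D.crit κ ∧ D.jGT κ θ ∧ D.hSub ∧ D.bMatch (u.mem · A) ∧
    ∃ μ, IsCardW u.mem μ ∧ IsHW u.mem μ N

/-- The weakening of virtual `(θ, A)`-strongness in which `N ⊆ V` is replaced by
`H_θ = H_θ^N`. -/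
def WeakAStrongAt (θ κ A : u.V) : Prop := ∃ h, IsHW u.mem θ h ∧
  ∃ D : GenEmb u h (u.mem · A) (fun _ => False), D.tgtTrans ∧
    D.crit κ ∧ D.jGT κ θ ∧ D.hEqHtgt θ ∧ D.bMatch (u.mem · A)

/-- `κ` is virtually `(<δ, A)`-strong: virtually `(θ, A ∩ H_θ)`-strong for all regular
(uncountable) `θ` with `κ < θ < δ`. -/
def VirtLtAStrong (δ κ A : u.V) : Prop :=
  ∀ θ, RegUncW u.mem θ → u.mem κ θ → u.mem θ δ → VirtAStrongAt u θ κ A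

/-- `κ` is faintly `(<δ, A)`-strong. -/
def FaintLtAStrong (δ κ A : u.V) : Prop :=
  ∀ θ, RegUncW u.mem θ → u.mem κ θ → u.mem θ δ → FaintAStrongAt u θ κ A

/-- `κ` is virtually `(<δ, A)`-supercompact. -/
def VirtLtASupercompact (δ κ A : u.V) : Prop :=
  ∀ θ, RegUncW u.mem θ → u.mem κ θ → u.mem θ δ → VirtASupercompactAt u θ κ A

/-- `κ` is virtually `(<δ, A)`-extendible. -/
def VirtLtAExtendible (δ κ A : u.V) : Prop :=
  ∀ θ, RegUncW u.mem θ → u.mem κ θ → u.mem θ δ → VirtAExtendibleAt u θ κ A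

/-- `δ` is virtually Woodin: for every `A ⊆ H_δ` there is a virtually `(<δ, A)`-strong
cardinal `κ < δ`. -/
def VirtWoodin (δ : u.V) : Prop := ∀ A, (∀ x, u.mem x A → InHW u.mem δ x) →
  ∃ κ, u.mem κ δ ∧ VirtLtAStrong u δ κ A

/-- `δ` is faintly Woodin. -/
def FaintWoodin (δ : u.V) : Prop := ∀ A, (∀ x, u.mem x A → InHW u.mem δ x) →
  ∃ κ, u.mem κ δ ∧ FaintLtAStrong u δ κ A

/- ### Class (`On`) versions, for GBC statements; classes are predicates on the universe -/

/-- `κ` is virtually `(θ, A)`-pre-strong for a class `A`. -/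
def VirtClassPreStrongAt (θ κ : u.V) (A : u.V → Prop) : Prop := ∃ h, IsHW u.mem θ h ∧
  ∃ (N : u.V) (D : GenEmb u h A (fun _ => False)), D.tgtIs N ∧ TransW u.mem N ∧
    D.crit κ ∧ D.hSub ∧ D.bMatch A

/-- `κ` is virtually `(θ, A)`-strong for a class `A`. -/
def VirtClassStrongAt (θ κ : u.V) (A : u.V → Prop) : Prop := ∃ h, IsHW u.mem θ h ∧
  ∃ (N : u.V) (D : GenEmb u h A (fun _ => False)), D.tgtIs N ∧ TransW u.mem N ∧
    D.crit κ ∧ D.jGT κ θ ∧ D.hSub ∧ D.bMatch A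

/-- `κ` is faintly `(θ, A)`-pre-strong for a class `A`. -/
def FaintClassPreStrongAt (θ κ : u.V) (A : u.V → Prop) : Prop := ∃ h, IsHW u.mem θ h ∧
  ∃ D : GenEmb u h A (fun _ => False), D.tgtTrans ∧ D.crit κ ∧ D.hSub ∧ D.bMatch A

/-- `On` is virtually pre-Woodin: for every class `A` there is a cardinal `κ` which is
virtually `(θ, A)`-pre-strong for all regular `θ > κ`. -/
def OnVirtPreWoodin : Prop := ∀ A : u.V → Prop, ∃ κ, IsCardW u.mem κ ∧
  ∀ θ, RegUncW u.mem θ → u.mem κ θ → VirtClassPreStrongAt u θ κ A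

/-- `On` is faintly pre-Woodin. -/
def OnFaintPreWoodin : Prop := ∀ A : u.V → Prop, ∃ κ, IsCardW u.mem κ ∧
  ∀ θ, RegUncW u.mem θ → u.mem κ θ → FaintClassPreStrongAt u θ κ A

/-- `On` is virtually Woodin. -/
def OnVirtWoodin : Prop := ∀ A : u.V → Prop, ∃ κ, IsCardW u.mem κ ∧
  ∀ θ, RegUncW u.mem θ → u.mem κ θ → VirtClassStrongAt u θ κ A

/- ### Berkeley cardinals -/

/-- `δ` is virtually proto-Berkeley: for every transitive set `M ⊇ δ` there is a generic
elementary embedding `π : M → M` with `crit π < δ`. -/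
def VirtProtoBerkeley (δ : u.V) : Prop := ∀ M, TransW u.mem M → SubW u.mem δ M →
  ∃ (D : PlainEmb u M) (κ : u.V), D.tgtIs M ∧ D.crit κ ∧ u.mem κ δ

/-- `δ` is virtually Berkeley: for every transitive set `M ⊇ δ` and every `η < δ` there is
a generic elementary embedding `π : M → M` with `η < crit π < δ`. -/
def VirtBerkeley (δ : u.V) : Prop := ∀ M, TransW u.mem M → SubW u.mem δ M → ∀ η, u.mem η δ →
  ∃ (D : PlainEmb u M) (κ : u.V), D.tgtIs M ∧ D.crit κ ∧ u.mem η κ ∧ u.mem κ δ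

/-- `δ` is virtually club Berkeley: for every transitive set `M ⊇ δ` and every club
`C ⊆ δ` there is a generic elementary embedding `π : M → M` with `crit π ∈ C`. -/
def VirtClubBerkeley (δ : u.V) : Prop := ∀ M, TransW u.mem M → SubW u.mem δ M →
  ∀ C, ClubInW u.mem C δ →
    ∃ (D : PlainEmb u M) (κ : u.V), D.tgtIs M ∧ D.crit κ ∧ u.mem κ C

/- ### The virtual Vopěnka principle -/

/-- `m` is (an ordered pair coding) a first-order structure with universe `a` and binary
relation `rel` (structures in an arbitrary common language are rendered, by the standard
coding, as structures with a single binary relation). -/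
def GraphStr (m a rel : u.V) : Prop := IsOPair u.mem m a rel ∧
  ∀ z, u.mem z rel → ∃ x y, u.mem x a ∧ u.mem y a ∧ IsOPair u.mem z x y

/-- `C` is a proper class (not included in any set). -/
def ProperClass (C : u.V → Prop) : Prop := ¬ ∃ s, ∀ m, C m → u.mem m s

end Notions

/-- A generic elementary embedding between two structures `(a, rel)` and `(a', rel')` of
the ground universe `u`, existing in (i.e. coded by an element of) a set-forcing
extension of `u`. -/
structure GenGraphEmb (u : ZFUniv.{u}) (a rel a' rel' : u.V) : Type (u + 1) where
  E : Extension u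
  emb : ElemEmb (u.mem · a) (RelIn u.mem rel) (fun _ => False) (fun _ => False)
    (E.W.mem · (E.inc a')) (RelIn E.W.mem (E.inc rel')) (fun _ => False) (fun _ => False)
  code : E.W.V
  code_fun : IsFuncW E.W.mem code (E.inc a) (E.inc a')
  code_graph : ∀ x (hx : u.mem x a), FApp E.W.mem code (E.inc x) (eApp emb ⟨x, hx⟩).1

/-- The virtual Vopěnka Principle: for every (proper) class `C` of structures in a common
language there are distinct `m, m' ∈ C` with a generic elementary embedding from `m`
to `m'`. -/
def VirtVP (u : ZFUniv.{u}) : Prop := ∀ C : u.V → Prop,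
  (∀ m, C m → ∃ a rel, GraphStr u m a rel) → ProperClass u C →
  ∃ m m' a rel a' rel', C m ∧ C m' ∧ m ≠ m' ∧ GraphStr u m a rel ∧ GraphStr u m' a' rel' ∧
    Nonempty (GenGraphEmb u a rel a' rel')

/- ### The cumulative hierarchy, natural sequences and the Vopěnka filter -/

/-- `IsVrank u α v` says `v = V_α`, the `α`-th level of the cumulative hierarchy
(`V_α = ⋃_{β ∈ α} 𝒫(V_β)`), defined by well-founded recursion. -/
def IsVrank (u : ZFUniv.{u}) : u.V → u.V → Prop :=
  u.wf.fix (C := fun _ => u.V → Prop)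
    (fun α ih v => ∀ x, u.mem x v ↔ ∃ β, ∃ hβ : u.mem β α, ∃ w, ih β hβ w ∧ SubW u.mem x w)

/-- A natural `On`-sequence of structures `M_α = (V_{f(α)}, ∈, {α}, R_α)`, given by an
indexing (class) function `f = F` and (class-many) unary relations `R_α ⊆ V_{f(α)}`;
`Vr α` realizes the level `V_{f(α)}`. -/
structure NatSeq (u : ZFUniv.{u}) : Type (u + 1) where
  F : u.V → u.V
  R : u.V → u.V
  Vr : u.V → u.V
  F_ord : ∀ α, OrdW u.mem α → OrdW u.mem (F α)
  F_gt : ∀ α, OrdW u.mem α → u.mem α (F α)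
  F_mono : ∀ α β, OrdW u.mem β → u.mem α β → ordLe u.mem (F α) (F β)
  Vr_spec : ∀ α, OrdW u.mem α → IsVrank u (F α) (Vr α)
  R_sub : ∀ α, OrdW u.mem α → SubW u.mem (R α) (Vr α)

/-- A generic elementary embedding `M_α → M_β` between two structures of a natural
sequence, where `M_α = (V_{f(α)}, ∈, R_α, {α})`. -/
structure GenNatEmb (u : ZFUniv.{u}) (S : NatSeq u) (α β : u.V) : Type (u + 1) where
  E : Extension u
  emb : ElemEmb (u.mem · (S.Vr α)) u.mem (u.mem · (S.R α)) (· = α)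
    (E.W.mem · (E.inc (S.Vr β))) E.W.mem (E.W.mem · (E.inc (S.R β))) (· = E.inc β)
  code : E.W.V
  code_fun : IsFuncW E.W.mem code (E.inc (S.Vr α)) (E.inc (S.Vr β))
  code_graph : ∀ x (hx : u.mem x (S.Vr α)), FApp E.W.mem code (E.inc x) (eApp emb ⟨x, hx⟩).1

/-- The critical point of a generic embedding between members of a natural sequence. -/
def GenNatEmb.crit {u : ZFUniv.{u}} {S : NatSeq u} {α β : u.V} (D : GenNatEmb u S α β)
    (κ : u.V) : Prop :=
  OrdW u.mem κ ∧ ∃ hκ : u.mem κ (S.Vr α),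
    (∀ γ (hγ : u.mem γ (S.Vr α)), u.mem γ κ → (eApp D.emb ⟨γ, hγ⟩).1 = D.E.inc γ) ∧
    (eApp D.emb ⟨κ, hκ⟩).1 ≠ D.E.inc κ

/-- The class `X` belongs to the virtual Vopěnka filter on `On`: there is a natural
sequence such that the critical point of any generic elementary embedding `M_α → M_β`
(`α < β`) lies in `X`. -/
def InVopFilter (u : ZFUniv.{u}) (X : u.V → Prop) : Prop := ∃ S : NatSeq u,
  ∀ α β, OrdW u.mem α → OrdW u.mem β → u.mem α β →
    ∀ (D : GenNatEmb u S α β) (κ : u.V), D.crit κ → X κ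

/-- `C` is a class club of ordinals. -/
def ClassClub (u : ZFUniv.{u}) (C : u.V → Prop) : Prop := (∀ x, C x → OrdW u.mem x) ∧
  (∀ α, OrdW u.mem α → ∃ β, C β ∧ u.mem α β) ∧
  (∀ γ, OrdW u.mem γ → (∃ x, u.mem x γ) →
    (∀ α, u.mem α γ → ∃ β, C β ∧ u.mem α β ∧ u.mem β γ) → C γ)

/-- `On` is Mahlo: every class club of ordinals contains a regular cardinal. -/
def OnMahlo (u : ZFUniv.{u}) : Prop :=
  ∀ C : u.V → Prop, ClassClub u C → ∃ κ, C κ ∧ RegularInfW u.mem κ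

/- ### The constructible universe -/

/-- `x` is a definable (with parameters) subset of the structure `(m, ∈)`. -/
def DefOverSet (u : ZFUniv.{u}) (m x : u.V) : Prop := SubW u.mem x m ∧
  ∃ (n : ℕ) (φ : L3.BoundedFormula (Fin n) 1) (prm : Fin n → {y : u.V // u.mem y m}),
    ∀ y (hy : u.mem y m),
      u.mem y x ↔ RealizeSub (u.mem · m) u.mem φ prm (fun _ => ⟨y, hy⟩)

/-- `IsL u α ℓ` says `ℓ = L_α`, the `α`-th level of Gödel's constructible hierarchy
(`L_α = ⋃_{β ∈ α} Def(L_β)`), defined by well-founded recursion. -/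
def IsL (u : ZFUniv.{u}) : u.V → u.V → Prop :=
  u.wf.fix (C := fun _ => u.V → Prop)
    (fun α ih ℓ => ∀ x, u.mem x ℓ ↔ ∃ β, ∃ hβ : u.mem β α, ∃ ℓβ, ih β hβ ℓβ ∧ DefOverSet u ℓβ x)

/-- The constructible universe `L` of `u`, as a class. -/
def ClassL (u : ZFUniv.{u}) (x : u.V) : Prop := ∃ α ℓ, OrdW u.mem α ∧ IsL u α ℓ ∧ u.mem x ℓ

/-- The universe `u` satisfies `V = L`. -/
def VeqL (u : ZFUniv.{u}) : Prop := ∀ x, ClassL u x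

end VLC

/-!
Cutolo's coding trick. Put `N = M ∪ {M} ∪ {{x, M} : x ∈ A ∪ {M}}`, a transitive set containing
`δ`. Inside `(N, ∈)` the set `M` is definable without parameters, as the unique element that lies
in some element of `N` and all of whose containers are `∈`-maximal in `N`; and `A` is definable
over `M` from the parameter `M`, as the set of `x ≠ M` sharing an element of `N` with `M`.
Hence a generic embedding `π : N → N` with `crit π < δ` fixes `M`, and every formula about
`(M, ∈, A)` becomes a formula about `(N, ∈)` with parameter `M` (bound the quantifiers by `M`
and replace `A` by its definition), so `π ↾ M : (M, ∈, A) → (M, ∈, A)` is elementary with the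
same critical point. Its code in the extension is cut out of the code of `π` by separation.
-/

namespace VLC

section Relativization

variable {α : Type*}

theorem L3.term_eq_var {β : Type*} (t : L3.Term β) : ∃ b, t = Term.var b := by
  cases t with
  | var b => exact ⟨b, rfl⟩
  | func f => exact nomatch f

def relativize : ∀ {l : ℕ}, L3.BoundedFormula α l → L3.BoundedFormula (α ⊕ Fin 1) l
  | _, .falsum => .falsum
  | _, .equal t₁ t₂ => .equal (t₁.relabel (Sum.map Sum.inl id)) (t₂.relabel (Sum.map Sum.inl id))
  | _, .rel .mem ts => .rel Rels.mem fun i => (ts i).relabel (Sum.map Sum.inl id)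
  | l, .rel .u1 ts =>
    let x := (ts 0).relabel (Sum.map Sum.inl Fin.castSucc)
    let m : L3.Term ((α ⊕ Fin 1) ⊕ Fin (l + 1)) := Term.var (Sum.inl (Sum.inr 0))
    (.rel Rels.mem ![x, &(Fin.last l)] ⊓ .rel Rels.mem ![m, &(Fin.last l)] ⊓ ∼(x.bdEqual m)).ex
  | _, .rel .u2 _ => .falsum
  | _, .imp φ ψ => (relativize φ).imp (relativize ψ)
  | l, .all φ =>
    .all ((BoundedFormula.rel Rels.mem ![&(Fin.last l), Term.var (Sum.inl (Sum.inr 0))]).imp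
      (relativize φ))

variable {U : Type*}

section

variable {d : U → Prop} {r : U → U → Prop} {B₁ B₂ : U → Prop} {l : ℕ} (v : α → {x // d x})
  (xs : Fin l → {x // d x})

@[simp]
theorem mstr_realize_rel_mem (ts : Fin 2 → L3.Term (α ⊕ Fin l)) :
    @BoundedFormula.Realize L3 _ (mstr d r B₁ B₂) _ _ (.rel Rels.mem ts) v xs ↔
      r (@Term.realize L3 _ (mstr d r B₁ B₂) _ (Sum.elim v xs) (ts 0)).1
        (@Term.realize L3 _ (mstr d r B₁ B₂) _ (Sum.elim v xs) (ts 1)).1 :=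
  Iff.rfl

@[simp]
theorem mstr_realize_rel_u1 (ts : Fin 1 → L3.Term (α ⊕ Fin l)) :
    @BoundedFormula.Realize L3 _ (mstr d r B₁ B₂) _ _ (.rel Rels.u1 ts) v xs ↔
      B₁ (@Term.realize L3 _ (mstr d r B₁ B₂) _ (Sum.elim v xs) (ts 0)).1 :=
  Iff.rfl

end

variable {s : U → U → Prop} {d : U → Prop} {m : U} (hm : d m) (hsub : ∀ x, s x m → d x)
  (C B₁ B₂ : U → Prop) (hC : ∀ x, s x m → (C x ↔ ∃ p, d p ∧ s x p ∧ s m p ∧ x ≠ m))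
  (v : α → {x // s x m})
include hC

theorem realize_relativize_rel {k l : ℕ} (R : L3.Relations k) (ts : Fin k → L3.Term (α ⊕ Fin l))
    (xs : Fin l → {x // s x m}) :
    @BoundedFormula.Realize L3 _ (mstr d s B₁ B₂) _ _ (relativize (.rel R ts))
        (Sum.elim (Subtype.map id hsub ∘ v) fun _ : Fin 1 => ⟨m, hm⟩) (Subtype.map id hsub ∘ xs) ↔
      @BoundedFormula.Realize L3 _ (mstr (s · m) s C fun _ => False) _ _ (.rel R ts) v xs := by
  cases R with
  | mem =>
    obtain ⟨b₀, h₀⟩ := L3.term_eq_var (ts 0)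
    obtain ⟨b₁, h₁⟩ := L3.term_eq_var (ts 1)
    simp only [relativize, mstr_realize_rel_mem, Term.realize_relabel, h₀, h₁, Term.realize_var,
      Sum.elim_comp_map, Sum.elim_comp_inl, Function.comp_id, ← Sum.comp_elim, Function.comp_apply]
    exact Iff.rfl
  | u1 =>
    obtain ⟨b₀, h₀⟩ := L3.term_eq_var (ts 0)
    simp only [relativize, BoundedFormula.realize_ex, BoundedFormula.realize_inf,
      BoundedFormula.realize_not, BoundedFormula.realize_bdEqual, mstr_realize_rel_mem,
      mstr_realize_rel_u1, Matrix.cons_val_zero, Matrix.cons_val_one, Fin.snoc_last, Sum.elim_inl,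
      Sum.elim_inr, Function.comp_apply, h₀, Term.realize_relabel, Term.realize_var,
      Sum.elim_comp_map, Sum.elim_comp_inl, ← Sum.comp_elim, Fin.snoc_comp_castSucc]
    rw [hC _ (Sum.elim v xs b₀).2]
    simp only [Subtype.exists, Subtype.ext_iff, Subtype.map_coe, id_eq]
    exact exists_congr fun p => by tauto
  | u2 => exact Iff.rfl

theorem realize_relativize {l : ℕ} (φ : L3.BoundedFormula α l) (xs : Fin l → {x // s x m}) :
    @BoundedFormula.Realize L3 _ (mstr d s B₁ B₂) _ _ (relativize φ)
        (Sum.elim (Subtype.map id hsub ∘ v) fun _ : Fin 1 => ⟨m, hm⟩) (Subtype.map id hsub ∘ xs) ↔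
      @BoundedFormula.Realize L3 _ (mstr (s · m) s C fun _ => False) _ _ φ v xs := by
  induction φ with
  | falsum => exact Iff.rfl
  | equal t₁ t₂ =>
    obtain ⟨b₁, rfl⟩ := L3.term_eq_var t₁
    obtain ⟨b₂, rfl⟩ := L3.term_eq_var t₂
    simp only [relativize, BoundedFormula.Realize, Term.realize_relabel, Term.realize_var,
      Sum.elim_comp_map, Sum.elim_comp_inl, Function.comp_id, ← Sum.comp_elim, Function.comp_apply]
    exact (Subtype.map_injective hsub Function.injective_id).eq_iff
  | rel R ts => exact realize_relativize_rel hm hsub C B₁ B₂ hC v R ts xs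
  | imp φ ψ ihφ ihψ => exact imp_congr (ihφ xs) (ihψ xs)
  | all φ ih =>
    simp only [relativize, BoundedFormula.realize_all, BoundedFormula.realize_imp,
      mstr_realize_rel_mem, Matrix.cons_val_zero, Matrix.cons_val_one, Term.realize_var,
      Function.comp_apply, Sum.elim_inl, Sum.elim_inr, Fin.snoc_last]
    constructor
    · intro H b
      rw [← ih, Fin.comp_snoc]
      exact H _ b.2
    · intro H a ha
      have := ih (Fin.snoc xs ⟨a, ha⟩)
      rw [Fin.comp_snoc] at this
      exact this.2 (H _)

end Relativization

def memFormula : L3.Formula (Fin 2) :=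
  BoundedFormula.rel Rels.mem ![Term.var (Sum.inl 0), Term.var (Sum.inl 1)]

theorem realize_memFormula {V : Type*} {d : V → Prop} {r : V → V → Prop} {B₁ B₂ : V → Prop}
    (v : Fin 2 → {x // d x}) :
    @Formula.Realize L3 _ (mstr d r B₁ B₂) _ memFormula v ↔ r (v 0).1 (v 1).1 :=
  Iff.rfl

namespace ElemEmb

variable {V W : Type*} {dV : V → Prop} {rV : V → V → Prop} {A₁ A₂ : V → Prop}
  {dW : W → Prop} {rW : W → W → Prop} {B₁ B₂ : W → Prop} (e : ElemEmb dV rV A₁ A₂ dW rW B₁ B₂)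

theorem realize_boundedFormula {α : Type*} {n : ℕ} (φ : L3.BoundedFormula α n)
    (v : α → {x // dV x}) (xs : Fin n → {x // dV x}) :
    @BoundedFormula.Realize L3 _ (mstr dW rW B₁ B₂) _ _ φ (eApp e ∘ v) (eApp e ∘ xs) ↔
      @BoundedFormula.Realize L3 _ (mstr dV rV A₁ A₂) _ _ φ v xs :=
  @ElementaryEmbedding.map_boundedFormula L3 _ _ (mstr dV rV A₁ A₂) (mstr dW rW B₁ B₂) e
    _ _ φ v xs

theorem realize_formula {n : ℕ} (φ : L3.Formula (Fin n)) (v : Fin n → {x // dV x}) :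
    @Formula.Realize L3 _ (mstr dW rW B₁ B₂) _ φ (eApp e ∘ v) ↔
      @Formula.Realize L3 _ (mstr dV rV A₁ A₂) _ φ v :=
  @ElementaryEmbedding.map_formula L3 _ _ (mstr dV rV A₁ A₂) (mstr dW rW B₁ B₂) e _ φ v

theorem apply_mem_apply {x y : {x // dV x}} (hxy : rV x.1 y.1) :
    rW (eApp e x).1 (eApp e y).1 :=
  (e.realize_formula memFormula ![x, y]).2 hxy

theorem apply_mem_of_apply_eq {m : V} (hm : dV m) {m' : W} (hπm : (eApp e ⟨m, hm⟩).1 = m')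
    {x : V} (hx : dV x) (hxm : rV x m) : rW (eApp e ⟨x, hx⟩).1 m' :=
  hπm ▸ e.apply_mem_apply (x := ⟨x, hx⟩) (y := ⟨m, hm⟩) hxm

def restrict {m : V} (hm : dV m) (hmV : ∀ x, rV x m → dV x) {m' : W} (hm' : dW m')
    (hmW : ∀ y, rW y m' → dW y) (hπm : (eApp e ⟨m, hm⟩).1 = m') {C : V → Prop} {C' : W → Prop}
    (hC : ∀ x, rV x m → (C x ↔ ∃ p, dV p ∧ rV x p ∧ rV m p ∧ x ≠ m))
    (hC' : ∀ y, rW y m' → (C' y ↔ ∃ p, dW p ∧ rW y p ∧ rW m' p ∧ y ≠ m')) :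
    ElemEmb (rV · m) rV C (fun _ => False) (rW · m') rW C' (fun _ => False) :=
  @ElementaryEmbedding.mk L3 _ _ (mstr _ _ _ _) (mstr _ _ _ _)
    (fun x => ⟨(eApp e ⟨x.1, hmV _ x.2⟩).1, e.apply_mem_of_apply_eq hm hπm _ x.2⟩)
    fun n θ v => by
      have hv (i : Fin n) : rW (eApp e ⟨(v i).1, hmV _ (v i).2⟩).1 m' :=
        e.apply_mem_of_apply_eq hm hπm _ (v i).2
      have hsrc := realize_relativize hm hmV C A₁ A₂ hC v θ default
      have htgt := realize_relativize hm' hmW C' B₁ B₂ hC' (fun i => ⟨_, hv i⟩) θ default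
      have hπ := e.realize_boundedFormula (relativize θ)
        (Sum.elim (Subtype.map id hmV ∘ v) fun _ => ⟨m, hm⟩) (Subtype.map id hmV ∘ default)
      have hval : eApp e ∘ Sum.elim (Subtype.map id hmV ∘ v) (fun _ : Fin 1 => ⟨m, hm⟩) =
          Sum.elim (Subtype.map id hmW ∘ fun i => ⟨_, hv i⟩) fun _ : Fin 1 => ⟨m', hm'⟩ := by
        funext i
        rcases i with i | i
        exacts [rfl, Subtype.ext hπm]
      have hempty : (eApp e ∘ Subtype.map id hmV ∘ default : Fin 0 → _) =
          Subtype.map id hmW ∘ default := Subsingleton.elim _ _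
      rw [hval, hempty, htgt] at hπ
      exact hπ.trans hsrc

end ElemEmb

def ContainedOnlyInMaximal {V : Type*} (r : V → V → Prop) (d : V → Prop) (m : V) : Prop :=
  (∃ p, d p ∧ r m p) ∧ ∀ p, d p → r m p → ∀ w, d w → ¬ r p w

def containedOnlyInMaximalFormula : L3.Formula (Fin 1) :=
  ∃' BoundedFormula.rel Rels.mem ![Term.var (Sum.inl 0), &0] ⊓
    ∀' (BoundedFormula.rel Rels.mem ![Term.var (Sum.inl 0), &0] ⟹
      ∀' ∼(BoundedFormula.rel Rels.mem ![&0, &1]))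

theorem realize_containedOnlyInMaximalFormula {V : Type*} {d : V → Prop} {r : V → V → Prop}
    {B₁ B₂ : V → Prop} (v : Fin 1 → {x // d x}) :
    @Formula.Realize L3 _ (mstr d r B₁ B₂) _ containedOnlyInMaximalFormula v ↔
      ContainedOnlyInMaximal r d (v 0).1 := by
  simp [Formula.Realize, containedOnlyInMaximalFormula, ContainedOnlyInMaximal, Fin.snoc]

@[simp]
theorem memStr_realize_rel_mem {V α : Type*} {r : V → V → Prop} {l : ℕ}
    (ts : Fin 2 → L3.Term (α ⊕ Fin l)) (v : α → V) (xs : Fin l → V) :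
    @BoundedFormula.Realize L3 _ (memStr r) _ _ (.rel Rels.mem ts) v xs ↔
      r (@Term.realize L3 _ (memStr r) _ (Sum.elim v xs) (ts 0))
        (@Term.realize L3 _ (memStr r) _ (Sum.elim v xs) (ts 1)) :=
  Iff.rfl

def upairFormula : L3.BoundedFormula (Fin 1) 2 :=
  ∀' ((BoundedFormula.rel Rels.mem ![&2, &1]).iff
    ((&2).bdEqual (&0) ⊔ (&2).bdEqual (Term.var (Sum.inl 0))))

theorem realizeIn_upairFormula {V : Type*} (r : V → V → Prop) (m x y : V) :
    RealizeIn r upairFormula ![m] ![x, y] ↔ IsUPair r y x m := by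
  simp [RealizeIn, upairFormula, IsUPair]

theorem IsOPair.forall_mem_mem_iff {V : Type*} {r : V → V → Prop} {z x y c : V}
    (hz : IsOPair r z x y) : (∀ p t, r p z → r t p → r t c) ↔ r x c ∧ r y c := by
  obtain ⟨sx, sxy, hsx, hsxy, hz⟩ := hz
  refine ⟨fun h => ⟨h sx x ((hz sx).2 (Or.inl rfl)) ((hsx x).2 (Or.inl rfl)),
    h sxy y ((hz sxy).2 (Or.inr rfl)) ((hsxy y).2 (Or.inr rfl))⟩, ?_⟩
  rintro ⟨hx, hy⟩ p t hp ht
  rcases (hz p).1 hp with rfl | rfl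
  · rcases (hsx t).1 ht with rfl | rfl <;> exact hx
  · rcases (hsxy t).1 ht with rfl | rfl
    exacts [hx, hy]

def unionSubsetFormula : L3.BoundedFormula (Fin 1) 1 :=
  ∀' ∀' (BoundedFormula.rel Rels.mem ![&1, &0] ⟹ BoundedFormula.rel Rels.mem ![&2, &1] ⟹
    BoundedFormula.rel Rels.mem ![&2, Term.var (Sum.inl 0)])

theorem realizeIn_unionSubsetFormula {V : Type*} (r : V → V → Prop) (c z : V) :
    RealizeIn r unionSubsetFormula ![c] (fun _ => z) ↔ ∀ p t, r p z → r t p → r t c := by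
  simp [RealizeIn, unionSubsetFormula, Fin.snoc]

namespace ZFUniv

variable (u : ZFUniv.{u})

theorem mem_irrefl (x : u.V) : ¬ u.mem x x := u.wf.irrefl.irrefl x

theorem mem_asymm {x y : u.V} (h : u.mem x y) : ¬ u.mem y x := u.wf.asymmetric x y h

theorem exists_union (a b : u.V) : ∃ c, ∀ z, u.mem z c ↔ u.mem z a ∨ u.mem z b := by
  obtain ⟨p, hp⟩ := u.pairing a b
  obtain ⟨c, hc⟩ := u.unions p
  refine ⟨c, fun z => (hc z).trans ⟨?_, ?_⟩⟩
  · rintro ⟨y, hy, hzy⟩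
    rcases (hp y).1 hy with rfl | rfl
    exacts [Or.inl hzy, Or.inr hzy]
  · rintro (hz | hz)
    exacts [⟨a, (hp a).2 (Or.inl rfl), hz⟩, ⟨b, (hp b).2 (Or.inr rfl), hz⟩]

theorem exists_upair_image (a m : u.V) :
    ∃ P, ∀ z, u.mem z P ↔ ∃ x, u.mem x a ∧ IsUPair u.mem z x m := by
  have hfun : ∀ x y y', u.mem x a → RealizeIn u.mem upairFormula ![m] ![x, y] →
      RealizeIn u.mem upairFormula ![m] ![x, y'] → y = y' := by
    intro x y y' _ hy hy'
    rw [realizeIn_upairFormula] at hy hy'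
    exact u.extensionality y y' fun z => (hy z).trans (hy' z).symm
  obtain ⟨P, hP⟩ := u.replacement 1 upairFormula ![m] a hfun
  exact ⟨P, fun z => (hP z).trans <| by simp only [realizeIn_upairFormula]⟩

theorem exists_restrict_fun {f a c : u.V} (hf : IsFunOn u.mem f a) (hca : SubW u.mem c a)
    (hc : ∀ x y, u.mem x c → FApp u.mem f x y → u.mem y c) :
    ∃ g, IsFuncW u.mem g c c ∧ ∀ x y, u.mem x c → FApp u.mem f x y → FApp u.mem g x y := by
  obtain ⟨g, hg⟩ := u.separation 1 unionSubsetFormula ![c] f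
  simp only [realizeIn_unionSubsetFormula] at hg
  have hgf : ∀ x y, FApp u.mem g x y ↔ FApp u.mem f x y ∧ u.mem x c ∧ u.mem y c := by
    intro x y
    constructor
    · rintro ⟨z, hzg, hz⟩
      exact ⟨⟨z, ((hg z).1 hzg).1, hz⟩, hz.forall_mem_mem_iff.1 ((hg z).1 hzg).2⟩
    · rintro ⟨⟨z, hzf, hz⟩, hxy⟩
      exact ⟨z, (hg z).2 ⟨hzf, hz.forall_mem_mem_iff.2 hxy⟩, hz⟩
  refine ⟨g, ⟨⟨?_, ?_, ?_⟩, ?_⟩, fun x y hx hxy => (hgf x y).2 ⟨hxy, hx, hc x y hx hxy⟩⟩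
  · intro z hz
    obtain ⟨x, y, -, hop⟩ := hf.1 z ((hg z).1 hz).1
    exact ⟨x, y, (hop.forall_mem_mem_iff.1 ((hg z).1 hz).2).1, hop⟩
  · intro x hx
    obtain ⟨y, hy⟩ := hf.2.1 x (hca x hx)
    exact ⟨y, (hgf x y).2 ⟨hy, hx, hc x y hx hy⟩⟩
  · exact fun x y y' hy hy' => hf.2.2 x y y' ((hgf x y).1 hy).1 ((hgf x y').1 hy').1
  · exact fun x y hxy => ((hgf x y).1 hxy).2.2

end ZFUniv

/-- The pair `{M, M}` makes sure that `M` lies in an element of `N` even when `A = ∅`. -/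
def IsCodingSet (u : ZFUniv.{u}) (M A N : u.V) : Prop :=
  ∀ z, u.mem z N ↔ u.mem z M ∨ z = M ∨ ∃ x, (u.mem x A ∨ x = M) ∧ IsUPair u.mem z x M

theorem exists_isCodingSet (u : ZFUniv.{u}) (M A : u.V) : ∃ N, IsCodingSet u M A N := by
  obtain ⟨sM, hsM⟩ := u.pairing M M
  obtain ⟨A', hA'⟩ := u.exists_union A sM
  obtain ⟨P, hP⟩ := u.exists_upair_image A' M
  obtain ⟨N₀, hN₀⟩ := u.exists_union M sM
  obtain ⟨N, hN⟩ := u.exists_union N₀ P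
  have hsM' : ∀ z, u.mem z sM ↔ z = M := fun z => (hsM z).trans or_self_iff
  exact ⟨N, fun z => by simp only [hN, hN₀, hsM', hP, hA', or_assoc]⟩

namespace IsCodingSet

variable {u : ZFUniv.{u}} {M A N : u.V} (hN : IsCodingSet u M A N)
include hN

theorem mem_self : u.mem M N := (hN M).2 (Or.inr (Or.inl rfl))

theorem subset : SubW u.mem M N := fun _ hz => (hN _).2 (Or.inl hz)

variable (hM : TransW u.mem M) (hA : SubW u.mem A M)
include hM hA

theorem transW : TransW u.mem N := by
  intro z y hz hy
  rcases (hN z).1 hz with hz | rfl | ⟨x, hx, hup⟩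
  · exact hN.subset _ (hM z y hz hy)
  · exact hN.subset _ hy
  · rcases (hup y).1 hy with rfl | rfl
    · rcases hx with hx | rfl
      exacts [hN.subset _ (hA _ hx), hN.mem_self]
    · exact hN.mem_self

theorem not_mem_of_self_mem {p : u.V} (hMp : u.mem M p) (w : u.V) (hw : u.mem w N) :
    ¬ u.mem p w := by
  intro hpw
  rcases (hN w).1 hw with hw | rfl | ⟨x, hx, hup⟩
  · exact u.mem_asymm hMp (hM w p hw hpw)
  · exact u.mem_asymm hMp hpw
  · rcases (hup p).1 hpw with rfl | rfl
    · rcases hx with hx | rfl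
      exacts [u.mem_asymm hMp (hA _ hx), u.mem_irrefl _ hMp]
    · exact u.mem_irrefl _ hMp

theorem containedOnlyInMaximal_iff {m : u.V} (hm : u.mem m N) :
    ContainedOnlyInMaximal u.mem (u.mem · N) m ↔ m = M := by
  obtain ⟨sM, hsM⟩ := u.pairing M M
  have hsMN : u.mem sM N := (hN sM).2 (Or.inr (Or.inr ⟨M, Or.inr rfl, hsM⟩))
  have hMsM : u.mem M sM := (hsM M).2 (Or.inl rfl)
  constructor
  · rintro ⟨⟨p, hp, hmp⟩, hmax⟩
    rcases (hN m).1 hm with hmM | rfl | ⟨x, -, hup⟩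
    · exact absurd hMsM (hmax M hN.mem_self hmM sM hsMN)
    · rfl
    · exact absurd hmp (hN.not_mem_of_self_mem hM hA ((hup M).2 (Or.inr rfl)) p hp)
  · rintro rfl
    exact ⟨⟨sM, hsMN, hMsM⟩, fun p _ hMp => hN.not_mem_of_self_mem hM hA hMp⟩

theorem mem_iff_exists (x : u.V) :
    u.mem x A ↔ ∃ p, u.mem p N ∧ u.mem x p ∧ u.mem M p ∧ x ≠ M := by
  constructor
  · intro hxA
    obtain ⟨p, hp⟩ := u.pairing x M
    refine ⟨p, (hN p).2 (Or.inr (Or.inr ⟨x, Or.inl hxA, hp⟩)), (hp x).2 (Or.inl rfl),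
      (hp M).2 (Or.inr rfl), ?_⟩
    rintro rfl
    exact u.mem_irrefl _ (hA _ hxA)
  · rintro ⟨p, hp, hxp, hMp, hxM⟩
    rcases (hN p).1 hp with hpM | rfl | ⟨y, hy, hup⟩
    · exact absurd (hM p M hpM hMp) (u.mem_irrefl M)
    · exact absurd hMp (u.mem_irrefl p)
    · rcases (hup x).1 hxp with rfl | rfl
      · exact hy.resolve_right hxM
      · exact absurd rfl hxM

end IsCodingSet

namespace Extension

variable {u : ZFUniv.{u}} (E : Extension u)

theorem mem_inc_iff {w : E.W.V} {x : u.V} :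
    E.W.mem w (E.inc x) ↔ ∃ y, u.mem y x ∧ E.inc y = w :=
  ⟨fun hw => (E.inc_trans x w hw).imp fun _ ⟨hy, hw⟩ => ⟨hy, hw.symm⟩,
    fun ⟨y, hy, hw⟩ => hw ▸ (E.inc_mem y x).2 hy⟩

theorem forall_mem_inc_iff {x : u.V} {P : E.W.V → Prop} :
    (∀ w, E.W.mem w (E.inc x) → P w) ↔ ∀ y, u.mem y x → P (E.inc y) := by
  simp only [E.mem_inc_iff, forall_exists_index, and_imp, forall_apply_eq_imp_iff₂]

theorem exists_mem_inc_iff {x : u.V} {P : E.W.V → Prop} :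
    (∃ w, E.W.mem w (E.inc x) ∧ P w) ↔ ∃ y, u.mem y x ∧ P (E.inc y) := by
  simp only [E.mem_inc_iff, exists_exists_and_eq_and]

theorem subW_inc {x y : u.V} (h : SubW u.mem x y) : SubW E.W.mem (E.inc x) (E.inc y) := by
  rw [SubW, E.forall_mem_inc_iff]
  exact fun z hz => (E.inc_mem z y).2 (h z hz)

theorem containedOnlyInMaximal_inc_iff {N m : u.V} :
    ContainedOnlyInMaximal E.W.mem (E.W.mem · (E.inc N)) (E.inc m) ↔
      ContainedOnlyInMaximal u.mem (u.mem · N) m := by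
  simp only [ContainedOnlyInMaximal, E.forall_mem_inc_iff, E.exists_mem_inc_iff, E.inc_mem]

end Extension

theorem IsCodingSet.inc_mem_iff_exists {u : ZFUniv.{u}} {M A N : u.V} (hN : IsCodingSet u M A N)
    (hM : TransW u.mem M) (hA : SubW u.mem A M) (E : Extension u) :
    ∀ w, E.W.mem w (E.inc M) → (E.W.mem w (E.inc A) ↔
      ∃ p, E.W.mem p (E.inc N) ∧ E.W.mem w p ∧ E.W.mem (E.inc M) p ∧ w ≠ E.inc M) := by
  rw [E.forall_mem_inc_iff]
  intro x _
  simp only [E.exists_mem_inc_iff, E.inc_mem, E.inc_inj.ne_iff, hN.mem_iff_exists hM hA]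

namespace GenEmb

variable {u : ZFUniv.{u}} {N : u.V} {B₁ B₂ : u.V → Prop} (D : GenEmb u N B₁ B₂)

theorem exists_apply_eq_inc {N' m : u.V} (hD : D.tgtIs N') (hm : u.mem m N)
    (hmax : ContainedOnlyInMaximal u.mem (u.mem · N) m) :
    ∃ m', u.mem m' N' ∧ (eApp D.emb ⟨m, hm⟩).1 = D.E.inc m' ∧
      ContainedOnlyInMaximal u.mem (u.mem · N') m' := by
  have hπm := (realize_containedOnlyInMaximalFormula _).1
    ((D.emb.realize_formula containedOnlyInMaximalFormula ![⟨m, hm⟩]).2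
      ((realize_containedOnlyInMaximalFormula _).2 hmax))
  have hπm_mem : D.E.W.mem (eApp D.emb ⟨m, hm⟩).1 (D.E.inc N') := hD ▸ (eApp D.emb ⟨m, hm⟩).2
  obtain ⟨m', hm', hm'eq⟩ := D.E.mem_inc_iff.1 hπm_mem
  refine ⟨m', hm', hm'eq.symm, ?_⟩
  rw [← D.E.containedOnlyInMaximal_inc_iff, hm'eq, ← hD]
  exact hπm

variable {M A : u.V} (hD : D.tgtIs N) (hN : IsCodingSet u M A N) (hM : TransW u.mem M)
  (hA : SubW u.mem A M)
include hD hN hM hA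

theorem apply_eq_inc_of_isCodingSet : (eApp D.emb ⟨M, hN.mem_self⟩).1 = D.E.inc M := by
  obtain ⟨m, hmN, hπM, hm⟩ := D.exists_apply_eq_inc hD hN.mem_self
    ((hN.containedOnlyInMaximal_iff hM hA hN.mem_self).2 rfl)
  rwa [(hN.containedOnlyInMaximal_iff hM hA hmN).1 hm] at hπM

theorem exists_restrict_of_isCodingSet :
    ∃ D' : GenEmb u M (u.mem · A) (fun _ => False), D'.tgtIs M ∧ D'.bMatch (u.mem · A) ∧
      ∀ κ, u.mem κ M → D.crit κ → D'.crit κ := by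
  have hMN : ∀ x, u.mem x M → u.mem x N := hN.subset
  have hincM : D.E.W.mem (D.E.inc M) D.tgt := hD ▸ (D.E.inc_mem M N).2 hN.mem_self
  have hMtgt : ∀ w, D.E.W.mem w (D.E.inc M) → D.E.W.mem w D.tgt := hD ▸ D.E.subW_inc hN.subset
  have hAtgt := hN.inc_mem_iff_exists hM hA D.E
  rw [← hD] at hAtgt
  let e := D.emb.restrict hN.mem_self hMN hincM hMtgt (D.apply_eq_inc_of_isCodingSet hD hN hM hA)
    (fun x _ => hN.mem_iff_exists hM hA x) hAtgt
  have hcode : ∀ x y, D.E.W.mem x (D.E.inc M) → FApp D.E.W.mem D.code x y →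
      D.E.W.mem y (D.E.inc M) := by
    intro x y hx hxy
    obtain ⟨x₀, hx₀, rfl⟩ := D.E.mem_inc_iff.1 hx
    rw [D.code_fun.1.2.2 _ _ _ hxy (D.code_graph x₀ (hMN _ hx₀))]
    exact (eApp e ⟨x₀, hx₀⟩).2
  obtain ⟨g, hg, hgf⟩ :=
    D.E.W.exists_restrict_fun D.code_fun.1 (D.E.subW_inc hN.subset) hcode
  refine ⟨⟨D.E, D.E.inc M, D.E.inc A, fun _ => False, e, g, hg,
    fun x hx => hgf _ _ ((D.E.inc_mem x M).2 hx) (D.code_graph x (hMN x hx))⟩,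
    rfl, fun x _ => D.E.inc_mem x A, ?_⟩
  rintro κ hκM ⟨hκ, _, hfix, hmove⟩
  exact ⟨hκ, hκM, fun α hα => hfix α (hMN α hα), hmove⟩

end GenEmb

theorem protoBerkeley_boldface_general (u : ZFUniv.{u}) (δ : u.V) :
    (VirtProtoBerkeley u δ →
      ∀ M, TransW u.mem M → SubW u.mem δ M → ∀ A, SubW u.mem A M →
        ∃ (D : GenEmb u M (u.mem · A) (fun _ => False)) (κ : u.V),
          D.tgtIs M ∧ D.bMatch (u.mem · A) ∧ D.crit κ ∧ u.mem κ δ) ∧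
    (VirtBerkeley u δ →
      ∀ M, TransW u.mem M → SubW u.mem δ M → ∀ A, SubW u.mem A M → ∀ η, u.mem η δ →
        ∃ (D : GenEmb u M (u.mem · A) (fun _ => False)) (κ : u.V),
          D.tgtIs M ∧ D.bMatch (u.mem · A) ∧ D.crit κ ∧ u.mem η κ ∧ u.mem κ δ) := by
  constructor
  · intro hPB M hM hδM A hA
    obtain ⟨N, hN⟩ := exists_isCodingSet u M A
    obtain ⟨D, κ, hD, hκ, hκδ⟩ := hPB N (hN.transW hM hA) fun x hx => hN.subset x (hδM x hx)
    obtain ⟨D', hD'M, hD'A, hcrit⟩ := D.exists_restrict_of_isCodingSet hD hN hM hA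
    exact ⟨D', κ, hD'M, hD'A, hcrit κ (hδM κ hκδ) hκ, hκδ⟩
  · intro hB M hM hδM A hA η hη
    obtain ⟨N, hN⟩ := exists_isCodingSet u M A
    obtain ⟨D, κ, hD, hκ, hηκ, hκδ⟩ :=
      hB N (hN.transW hM hA) (fun x hx => hN.subset x (hδM x hx)) η hη
    obtain ⟨D', hD'M, hD'A, hcrit⟩ := D.exists_restrict_of_isCodingSet hD hN hM hA
    exact ⟨D', κ, hD'M, hD'A, hcrit κ (hδM κ hκδ) hκ, hηκ, hκδ⟩

/-- **Proposition 5.3 (virtualised Cutolo).** If `δ` is virtually proto-Berkeley, then for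
every transitive set `M` with `δ ⊆ M` and every `A ⊆ M` there is a generic elementary
embedding `π : (M, ∈, A) → (M, ∈, A)` with `crit π < δ`. If `δ` is virtually Berkeley,
then moreover `crit π` can be chosen arbitrarily large below `δ`. -/
theorem protoBerkeley_boldface (u : ZFUniv.{u}) (δ : u.V) (hδ : IsCardW u.mem δ) :
    (VirtProtoBerkeley u δ →
      ∀ M, TransW u.mem M → SubW u.mem δ M → ∀ A, SubW u.mem A M →
        ∃ (D : GenEmb u M (u.mem · A) (fun _ => False)) (κ : u.V),
          D.tgtIs M ∧ D.bMatch (u.mem · A) ∧ D.crit κ ∧ u.mem κ δ) ∧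
    (VirtBerkeley u δ →
      ∀ M, TransW u.mem M → SubW u.mem δ M → ∀ A, SubW u.mem A M → ∀ η, u.mem η δ →
        ∃ (D : GenEmb u M (u.mem · A) (fun _ => False)) (κ : u.V),
          D.tgtIs M ∧ D.bMatch (u.mem · A) ∧ D.crit κ ∧ u.mem η κ ∧ u.mem κ δ) :=
  protoBerkeley_boldface_general u δ

end VLC
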